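/- Let n ≥ 2 be an integer, let 0 < A ≤ ∞, and let U : (0, A) → ℝ be a smooth solution of the expander ODE U²U'' + ((n−1−U²)/ρ + ρ/2)U' + ((n−1)/ρ²)(1−U²)U = 0 satisfying 0 < U(ρ) < 1 for all ρ ∈ (0, A) and lim_{ρ→0⁺} U(ρ) = 1. Then U'(ρ) < 0 for all ρ ∈ (0, A) (so U is strictly decreasing), and inf_{ρ ∈ (0,A)} U(ρ) > 0. -/

import Mathlib

open Real Set Filter Topology
open scoped ContDiff

/-- Left-hand side of the expander ODE
`U²U'' + ((n-1-U²)/ρ + ρ/2)U' + ((n-1)/ρ²)(1-U²)U = 0`. -/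
noncomputable def expanderLHS (n : ℕ) (U : ℝ → ℝ) (ρ : ℝ) : ℝ :=
  (U ρ)^2 * deriv (deriv U) ρ
    + ((((n:ℝ) - 1) - (U ρ)^2) / ρ + ρ / 2) * deriv U ρ
    + (((n:ℝ) - 1) / ρ^2) * (1 - (U ρ)^2) * U ρ

/-- Auxiliary Lyapunov function for the expander ODE. -/
noncomputable def auxW (m : ℝ) (U : ℝ → ℝ) (ρ : ℝ) : ℝ :=
  Real.log (U ρ) - (1/(2*m)) * (ρ^2 * (deriv U ρ)^2 / 2
    + m * (Real.log (U ρ) - (U ρ)^2/2)) - m/2 * (ρ^2)⁻¹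

lemma auxW_hasDerivAt (m : ℝ) (hm : 0 < m) (U : ℝ → ℝ) (ρ : ℝ) (hρ : 0 < ρ)
    (hu : 0 < U ρ)
    (h1 : HasDerivAt U (deriv U ρ) ρ)
    (h2 : HasDerivAt (deriv U) (deriv (deriv U) ρ) ρ) :
    HasDerivAt (auxW m U)
      (deriv U ρ / U ρ
        - (1/(2*m)) * (ρ * (deriv U ρ)^2 + ρ^2 * (deriv U ρ) * (deriv (deriv U) ρ)
            + m * (deriv U ρ / U ρ - U ρ * deriv U ρ))
        + m / ρ^3) ρ := by
  have hune : U ρ ≠ 0 := ne_of_gt hu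
  have hρne : ρ ≠ 0 := ne_of_gt hρ
  have ha : HasDerivAt (fun x : ℝ => x^2) ((2:ℕ) * ρ^1) ρ := hasDerivAt_pow 2 ρ
  have hb : HasDerivAt (fun x => (deriv U x)^2)
      ((2:ℕ) * (deriv U ρ)^1 * deriv (deriv U) ρ) ρ := h2.pow 2
  have hab : HasDerivAt (fun x => x^2 * (deriv U x)^2 / 2)
      (((2:ℕ) * ρ^1 * (deriv U ρ)^2
        + ρ^2 * ((2:ℕ) * (deriv U ρ)^1 * deriv (deriv U) ρ)) / 2) ρ :=
    (ha.mul hb).div_const 2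
  have hlog : HasDerivAt (fun x => Real.log (U x)) (deriv U ρ / U ρ) ρ := h1.log hune
  have hsq : HasDerivAt (fun x => (U x)^2 / 2) (((2:ℕ) * (U ρ)^1 * deriv U ρ) / 2) ρ :=
    (h1.pow 2).div_const 2
  have hinv : HasDerivAt (fun x : ℝ => (x^2)⁻¹) (-((2:ℕ) * ρ^1) / (ρ^2)^2) ρ :=
    ha.inv (pow_ne_zero 2 hρne)
  have hbig : HasDerivAt (auxW m U)
      (deriv U ρ / U ρ
        - (1/(2*m)) * (((2:ℕ) * ρ^1 * (deriv U ρ)^2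
            + ρ^2 * ((2:ℕ) * (deriv U ρ)^1 * deriv (deriv U) ρ)) / 2
          + m * (deriv U ρ / U ρ - ((2:ℕ) * (U ρ)^1 * deriv U ρ) / 2))
        - m/2 * (-((2:ℕ) * ρ^1) / (ρ^2)^2)) ρ :=
    (hlog.sub ((hab.add ((hlog.sub hsq).const_mul m)).const_mul (1/(2*m)))).sub
      (hinv.const_mul (m/2))
  have hval : (deriv U ρ / U ρ
        - (1/(2*m)) * (((2:ℕ) * ρ^1 * (deriv U ρ)^2
            + ρ^2 * ((2:ℕ) * (deriv U ρ)^1 * deriv (deriv U) ρ)) / 2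
          + m * (deriv U ρ / U ρ - ((2:ℕ) * (U ρ)^1 * deriv U ρ) / 2))
        - m/2 * (-((2:ℕ) * ρ^1) / (ρ^2)^2))
      = (deriv U ρ / U ρ
        - (1/(2*m)) * (ρ * (deriv U ρ)^2 + ρ^2 * (deriv U ρ) * (deriv (deriv U) ρ)
            + m * (deriv U ρ / U ρ - U ρ * deriv U ρ))
        + m / ρ^3) := by
    push_cast
    field_simp
    ring
  rw [hval] at hbig
  exact hbig

/-- The derivative of the Lyapunov function is nonnegative, given the ODE,
in the region `u² ≤ 1/2`. -/
lemma auxW_deriv_nonneg (m ρ u v w : ℝ) (hm : 1 ≤ m) (hρ : 0 < ρ) (hu : 0 < u)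
    (hu2 : u^2 ≤ 1/2)
    (hode : u^2 * w + ((m - u^2)/ρ + ρ/2) * v + (m/ρ^2) * (1 - u^2) * u = 0) :
    0 ≤ v/u - (1/(2*m)) * (ρ*v^2 + ρ^2*v*w + m*(v/u - u*v)) + m/ρ^3 := by
  have hmpos : (0:ℝ) < m := by linarith
  have hune : u ≠ 0 := ne_of_gt hu
  have hρne : ρ ≠ 0 := ne_of_gt hρ
  have hww : w = (-(((m - u^2)/ρ + ρ/2) * v + (m/ρ^2) * (1 - u^2) * u)) / u^2 := by
    rw [eq_div_iff (pow_ne_zero 2 hune)]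
    linear_combination hode
  have key : v/u - (1/(2*m)) * (ρ*v^2 + ρ^2*v*w + m*(v/u - u*v)) + m/ρ^3
      = (ρ^3 * v + 2*m*u)^2 / (4*m*u^2*ρ^3)
        + (m - 2*u^2) * (ρ * v^2 / u^2) / (2*m) := by
    rw [hww]
    field_simp
    ring
  rw [key]
  have t1 : 0 ≤ (ρ^3 * v + 2*m*u)^2 / (4*m*u^2*ρ^3) := by positivity
  have t2 : 0 ≤ (m - 2*u^2) * (ρ * v^2 / u^2) / (2*m) := by
    apply div_nonneg _ (by linarith)
    apply mul_nonneg (by nlinarith) (by positivity)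
  linarith

/-- If `U` solves the expander ODE on `(0, A)` (`0 < A ≤ ∞`) with `0 < U < 1` and
`U(ρ) → 1` as `ρ → 0⁺`, then `U` is strictly decreasing and `inf U > 0`. -/
theorem stmt13 (n : ℕ) (hn : 2 ≤ n) (A : EReal) (hA : (0 : EReal) < A)
    (U : ℝ → ℝ)
    (hU : ContDiffOn ℝ (⊤ : ℕ∞) U {ρ : ℝ | 0 < ρ ∧ (ρ : EReal) < A})
    (hode : ∀ ρ : ℝ, 0 < ρ → (ρ : EReal) < A → expanderLHS n U ρ = 0)
    (hbd : ∀ ρ : ℝ, 0 < ρ → (ρ : EReal) < A → 0 < U ρ ∧ U ρ < 1)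
    (hlim : Tendsto U (nhdsWithin 0 (Ioi 0)) (nhds 1)) :
    (∀ ρ : ℝ, 0 < ρ → (ρ : EReal) < A → deriv U ρ < 0) ∧
    ∃ c > (0:ℝ), ∀ ρ : ℝ, 0 < ρ → (ρ : EReal) < A → c ≤ U ρ := by
  set S : Set ℝ := {ρ : ℝ | 0 < ρ ∧ (ρ : EReal) < A} with hSdef
  have hSopen : IsOpen S := by
    have : S = Ioi (0:ℝ) ∩ (fun x : ℝ => (x : EReal)) ⁻¹' (Iio A) := rfl
    rw [this]
    exact isOpen_Ioi.inter (isOpen_Iio.preimage continuous_coe_real_ereal)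
  have hSconv : Convex ℝ S := by
    apply Set.OrdConnected.convex
    constructor
    intro x hx y hy z hz
    exact ⟨lt_of_lt_of_le hx.1 hz.1,
      lt_of_le_of_lt (EReal.coe_le_coe_iff.2 hz.2) hy.2⟩
  have hm1 : (1:ℝ) ≤ (n:ℝ) - 1 := by
    have : (2:ℝ) ≤ (n:ℝ) := by exact_mod_cast hn
    linarith
  set m : ℝ := (n:ℝ) - 1 with hmdef
  have hmpos : (0:ℝ) < m := by linarith
  -- smoothness facts
  have hCinf : ContDiffOn ℝ (∞ : WithTop ℕ∞) U S := hU.of_le (by simp)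
  have hdUsm : ContDiffOn ℝ (∞ : WithTop ℕ∞) (deriv U) S :=
    hCinf.deriv_of_isOpen hSopen (by exact le_of_eq rfl)
  have hone : (1 : WithTop ℕ∞) ≤ (∞ : WithTop ℕ∞) := by
    exact_mod_cast (le_top : (1:ℕ∞) ≤ ⊤)
  have hdU : ∀ ρ ∈ S, HasDerivAt U (deriv U ρ) ρ := fun ρ hρ =>
    (((hCinf.differentiableOn (by simp)).differentiableAt (hSopen.mem_nhds hρ))).hasDerivAt
  have hdU2 : ∀ ρ ∈ S, HasDerivAt (deriv U) (deriv (deriv U) ρ) ρ := fun ρ hρ =>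
    (((hdUsm.differentiableOn (by simp)).differentiableAt (hSopen.mem_nhds hρ))).hasDerivAt
  have hodeS : ∀ ρ ∈ S, (U ρ)^2 * deriv (deriv U) ρ
      + ((m - (U ρ)^2) / ρ + ρ / 2) * deriv U ρ
      + (m / ρ^2) * (1 - (U ρ)^2) * U ρ = 0 := by
    intro ρ hρ
    have := hode ρ hρ.1 hρ.2
    unfold expanderLHS at this
    exact this
  -- at a critical point, U'' < 0
  have hcrit : ∀ ρ₀ ∈ S, deriv U ρ₀ = 0 → deriv (deriv U) ρ₀ < 0 := by
    intro ρ₀ hρ₀ hv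
    have heq := hodeS ρ₀ hρ₀
    rw [hv] at heq
    obtain ⟨hu0, hu1⟩ := hbd ρ₀ hρ₀.1 hρ₀.2
    have h12 : 0 < 1 - (U ρ₀)^2 := by nlinarith
    have hterm : 0 < m / ρ₀^2 * (1 - (U ρ₀)^2) * (U ρ₀) :=
      mul_pos (mul_pos (div_pos hmpos (pow_pos hρ₀.1 2)) h12) hu0
    have hU2 : 0 < (U ρ₀)^2 := pow_pos hu0 2
    nlinarith
  -- near a critical point, U' > 0 on the left, so U takes smaller values on the left
  have hdrop : ∀ ρ₀ ∈ S, deriv U ρ₀ = 0 → ∀ b : ℝ, 0 < b → b < ρ₀ →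
      ∃ x, b < x ∧ x < ρ₀ ∧ U x < U ρ₀ := by
    intro ρ₀ hρ₀ hv b hb hbρ
    have hw := hcrit ρ₀ hρ₀ hv
    have ht : Tendsto (slope (deriv U) ρ₀) (𝓝[≠] ρ₀) (𝓝 (deriv (deriv U) ρ₀)) :=
      hasDerivAt_iff_tendsto_slope.1 (hdU2 ρ₀ hρ₀)
    have hev : ∀ᶠ x in 𝓝[≠] ρ₀, slope (deriv U) ρ₀ x < 0 :=
      ht.eventually (eventually_lt_nhds hw)
    have hev' : ∀ᶠ x in 𝓝[<] ρ₀, slope (deriv U) ρ₀ x < 0 :=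
      hev.filter_mono (nhdsWithin_mono ρ₀ (fun x hx => ne_of_lt hx))
    obtain ⟨a, ha, hsub⟩ := (mem_nhdsLT_iff_exists_Ioo_subset).1 hev'
    have ha' : a < ρ₀ := ha
    set a' : ℝ := max a b with ha'def
    have haρ : a' < ρ₀ := max_lt ha' hbρ
    have hpos : ∀ x ∈ Ioo a' ρ₀, 0 < deriv U x := by
      intro x hx
      have hxmem : x ∈ Ioo a ρ₀ := ⟨lt_of_le_of_lt (le_max_left a b) hx.1, hx.2⟩
      have hs : slope (deriv U) ρ₀ x < 0 := hsub hxmem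
      rw [slope_def_field, hv] at hs
      rcases div_neg_iff.1 hs with ⟨h1, h2⟩ | ⟨h1, h2⟩
      · linarith
      · linarith [hx.2]
    set x₀ : ℝ := (a' + ρ₀) / 2 with hx₀def
    have hx₀1 : a' < x₀ := by rw [hx₀def]; linarith
    have hx₀2 : x₀ < ρ₀ := by rw [hx₀def]; linarith
    have hb' : b ≤ a' := le_max_right a b
    have hIccS : Icc x₀ ρ₀ ⊆ S := by
      intro x hx
      refine ⟨by linarith [hx.1], ?_⟩
      exact lt_of_le_of_lt (EReal.coe_le_coe_iff.2 hx.2) hρ₀.2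
    have hmono : StrictMonoOn U (Icc x₀ ρ₀) := by
      apply strictMonoOn_of_deriv_pos (convex_Icc x₀ ρ₀) (hU.continuousOn.mono hIccS)
      intro x hx
      rw [interior_Icc] at hx
      exact hpos x ⟨lt_trans hx₀1 hx.1, hx.2⟩
    refine ⟨x₀, lt_of_le_of_lt hb' hx₀1, hx₀2, ?_⟩
    exact hmono (left_mem_Icc.2 hx₀2.le) (right_mem_Icc.2 hx₀2.le) hx₀2
  -- Part 1 : U' < 0 on S
  have hneg : ∀ ρ ∈ S, deriv U ρ < 0 := by
    intro ρ₁ hρ₁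
    by_contra hcon
    push_neg at hcon
    obtain ⟨hu0, hu1⟩ := hbd ρ₁ hρ₁.1 hρ₁.2
    have hc1 : (1 + U ρ₁)/2 < 1 := by linarith
    have hev : ∀ᶠ ρ in 𝓝[>] (0:ℝ), (1 + U ρ₁)/2 < U ρ :=
      hlim.eventually (eventually_gt_nhds hc1)
    obtain ⟨u, hu, hsub⟩ := (mem_nhdsGT_iff_exists_Ioo_subset).1 hev
    have hu' : (0:ℝ) < u := hu
    set ε : ℝ := min (u/2) (ρ₁/2) with hεdef
    have hε0 : 0 < ε := lt_min (by linarith) (by linarith [hρ₁.1])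
    have hερ : ε < ρ₁ := lt_of_le_of_lt (min_le_right _ _) (by linarith [hρ₁.1])
    have hεu : ε < u := lt_of_le_of_lt (min_le_left _ _) (by linarith)
    have hUε : (1 + U ρ₁)/2 < U ε := hsub ⟨hε0, hεu⟩
    have hIcc : Icc ε ρ₁ ⊆ S := by
      intro x hx
      exact ⟨lt_of_lt_of_le hε0 hx.1,
        lt_of_le_of_lt (EReal.coe_le_coe_iff.2 hx.2) hρ₁.2⟩
    obtain ⟨ρ₂, hρ₂mem, hmin⟩ :=
      isCompact_Icc.exists_isMinOn (nonempty_Icc.2 hερ.le) (hU.continuousOn.mono hIcc)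
    have hρ₂ε : ε < ρ₂ := by
      rcases eq_or_lt_of_le hρ₂mem.1 with heq | hlt
      · exfalso
        have h1 : U ρ₂ ≤ U ρ₁ := hmin (right_mem_Icc.2 hερ.le)
        rw [heq] at hUε
        linarith
      · exact hlt
    have hρ₂S : ρ₂ ∈ S := hIcc hρ₂mem
    have hv2 : deriv U ρ₂ = 0 := by
      rcases eq_or_lt_of_le hρ₂mem.2 with heq | hlt
      · -- ρ₂ = ρ₁ : min at right endpoint, so deriv ≤ 0; with hcon, = 0
        have hder : HasDerivWithinAt U (deriv U ρ₁) (Iio ρ₁) ρ₁ :=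
          (hdU ρ₁ hρ₁).hasDerivWithinAt
        have hnm : ρ₁ ∉ Iio ρ₁ := by simp
        have hslope : Tendsto (slope U ρ₁) (𝓝[Iio ρ₁] ρ₁) (𝓝 (deriv U ρ₁)) :=
          (hasDerivWithinAt_iff_tendsto_slope' hnm).1 hder
        have hle : deriv U ρ₁ ≤ 0 := by
          apply le_of_tendsto hslope
          filter_upwards [Ioo_mem_nhdsLT_of_mem (show ρ₁ ∈ Ioc ε ρ₁ from ⟨hερ, le_rfl⟩)]
            with x hx
          have hxmem : x ∈ Icc ε ρ₁ := ⟨hx.1.le, hx.2.le⟩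
          have h1 : U ρ₂ ≤ U x := hmin hxmem
          rw [heq] at h1
          rw [slope_def_field]
          apply div_nonpos_of_nonneg_of_nonpos
          · linarith
          · linarith [hx.2]
        rw [heq]
        linarith
      · have hlocal : IsLocalMin U ρ₂ :=
          hmin.isLocalMin (Icc_mem_nhds hρ₂ε hlt)
        exact hlocal.deriv_eq_zero
    obtain ⟨x, hx1, hx2, hx3⟩ := hdrop ρ₂ hρ₂S hv2 ε hε0 hρ₂ε
    have : U ρ₂ ≤ U x := hmin ⟨hx1.le, le_trans hx2.le hρ₂mem.2⟩
    linarith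
  -- U is antitone on S
  have hanti : AntitoneOn U S := by
    apply antitoneOn_of_deriv_nonpos hSconv hU.continuousOn
    · rw [hSopen.interior_eq]
      exact hCinf.differentiableOn (by simp)
    · intro x hx
      rw [hSopen.interior_eq] at hx
      exact (hneg x hx).le
  constructor
  · intro ρ hρ hρA
    exact hneg ρ ⟨hρ, hρA⟩
  -- Part 2 : inf U > 0
  by_cases hcase : ∃ ρ₁ ∈ S, (U ρ₁)^2 ≤ 1/2
  · obtain ⟨ρ₁, hρ₁S, hρ₁half⟩ := hcase
    have hρ₁0 := (hbd ρ₁ hρ₁S.1 hρ₁S.2).1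
    -- W = auxW m U is monotone on S ∩ Ici ρ₁
    have hWder : ∀ ρ ∈ S, HasDerivAt (auxW m U)
        (deriv U ρ / U ρ
          - (1/(2*m)) * (ρ * (deriv U ρ)^2 + ρ^2 * (deriv U ρ) * (deriv (deriv U) ρ)
              + m * (deriv U ρ / U ρ - U ρ * deriv U ρ))
          + m / ρ^3) ρ := fun ρ hρ =>
      auxW_hasDerivAt m hmpos U ρ hρ.1 (hbd ρ hρ.1 hρ.2).1 (hdU ρ hρ) (hdU2 ρ hρ)
    have hWdiffS : ∀ ρ ∈ S, DifferentiableAt ℝ (auxW m U) ρ :=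
      fun ρ hρ => (hWder ρ hρ).differentiableAt
    have hTint : interior (S ∩ Ici ρ₁) = S ∩ Ioi ρ₁ := by
      rw [interior_inter, hSopen.interior_eq, interior_Ici]
    have hWmono : MonotoneOn (auxW m U) (S ∩ Ici ρ₁) := by
      apply monotoneOn_of_deriv_nonneg (hSconv.inter (convex_Ici ρ₁))
      · exact fun ρ hρ => ((hWdiffS ρ hρ.1).continuousAt).continuousWithinAt
      · intro ρ hρ
        rw [hTint] at hρ
        exact ((hWdiffS ρ hρ.1).differentiableWithinAt)
      · intro ρ hρ
        rw [hTint] at hρ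
        rw [(hWder ρ hρ.1).deriv]
        have hu0 := (hbd ρ hρ.1.1 hρ.1.2).1
        have hUle : U ρ ≤ U ρ₁ := hanti hρ₁S hρ.1 hρ.2.le
        have hhalf : (U ρ)^2 ≤ 1/2 := by nlinarith
        exact auxW_deriv_nonneg m ρ (U ρ) (deriv U ρ) (deriv (deriv U) ρ)
          hm1 hρ.1.1 hu0 hhalf (hodeS ρ hρ.1)
    -- conclude the lower bound on S ∩ Ici ρ₁
    set c₂ : ℝ := Real.exp (2 * auxW m U ρ₁ - 1/2) with hc₂def
    have hc₂pos : 0 < c₂ := Real.exp_pos _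
    have hbound : ∀ ρ ∈ S, ρ₁ ≤ ρ → c₂ ≤ U ρ := by
      intro ρ hρS hρρ₁
      have hu0 := (hbd ρ hρS.1 hρS.2).1
      have hu1 := (hbd ρ hρS.1 hρS.2).2
      have hW1 : auxW m U ρ₁ ≤ auxW m U ρ :=
        hWmono ⟨hρ₁S, Set.self_mem_Ici⟩ ⟨hρS, Set.mem_Ici.2 hρρ₁⟩ hρρ₁
      have hWρ : auxW m U ρ ≤ Real.log (U ρ) / 2 + 1/4 := by
        unfold auxW
        have h1 : 0 ≤ ρ^2 * (deriv U ρ)^2 / 2 := by positivity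
        have h2 : (U ρ)^2/2 ≤ 1/2 := by nlinarith
        have h3 : 0 < m/2 * (ρ^2)⁻¹ := by
          have := hρS.1
          positivity
        have h4 : (1/(2*m)) * (m * (Real.log (U ρ) - 1/2))
            ≤ (1/(2*m)) * (ρ^2 * (deriv U ρ)^2 / 2
              + m * (Real.log (U ρ) - (U ρ)^2/2)) := by
          apply mul_le_mul_of_nonneg_left _ (by positivity)
          nlinarith
        have h5 : (1/(2*m)) * (m * (Real.log (U ρ) - 1/2)) = Real.log (U ρ)/2 - 1/4 := by
          field_simp
          ring
        linarith
      have hlog : 2 * auxW m U ρ₁ - 1/2 ≤ Real.log (U ρ) := by linarith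
      calc c₂ = Real.exp (2 * auxW m U ρ₁ - 1/2) := rfl
        _ ≤ Real.exp (Real.log (U ρ)) := Real.exp_le_exp.2 hlog
        _ = U ρ := Real.exp_log hu0
    refine ⟨min (U ρ₁) c₂, lt_min hρ₁0 hc₂pos, ?_⟩
    intro ρ hρ0 hρA
    have hρS : ρ ∈ S := ⟨hρ0, hρA⟩
    rcases le_or_gt ρ ρ₁ with hle | hlt
    · exact le_trans (min_le_left _ _) (hanti hρS hρ₁S hle)
    · exact le_trans (min_le_right _ _) (hbound ρ hρS hlt.le)
  · push_neg at hcase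
    refine ⟨Real.sqrt (1/2), Real.sqrt_pos.2 (by norm_num), ?_⟩
    intro ρ hρ0 hρA
    have hρS : ρ ∈ S := ⟨hρ0, hρA⟩
    have h1 := hcase ρ hρS
    have hu0 := (hbd ρ hρ0 hρA).1
    calc Real.sqrt (1/2) ≤ Real.sqrt ((U ρ)^2) := Real.sqrt_le_sqrt h1.le
      _ = U ρ := Real.sqrt_sq hu0.le
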